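/- arXiv:math/0703495 — 6 statements merged into one kernel-verified Lean document; each statement's English description precedes it below -/
import Mathlib

section
/- Let V and M be finite-dimensional real inner product spaces, and let L : V → M → M be a velocity map that is linear in its first argument and such that for each w ∈ V the map Q ↦ L w Q is continuously differentiable. Suppose the closure condition holds: there is a bracket b : V → V → V such that L (b u v) Q = (D(L v)(Q))(L u Q) − (D(L u)(Q))(L v Q) for all u, v ∈ V and Q ∈ M, where D(L v)(Q) denotes the Fréchet derivative of Q ↦ L v Q at Q. Let ξ : ℝ → V be continuous and let Q, P : ℝ → M be differentiable curves satisfying, for all t: (i) Q′(t) = L (ξ t) (Q t), and (ii) ⟪P′(t), v⟫ = −⟪P t, (D(L (ξ t))(Q t))(v)⟫ for every v ∈ M. Then for every w ∈ V, the function t ↦ ⟪P t, L w (Q t)⟫ is differentiable with derivative ⟪P t, L (b (ξ t) w) (Q t)⟫; equivalently, the momentum m(t) ∈ V defined by ⟪m t, w⟫ = ⟪P t, L w (Q t)⟫ for all w satisfies the Euler–Poincaré equation d/dt ⟪m, w⟫ = ⟪m, b(ξ, w)⟫. -/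
open RealInnerProductSpace VectorField

/-!
Differentiating `⟪P, F ∘ Q⟫` by the product and chain rules gives `⟪P', F Q⟫ + ⟪P, DF(Q) Q'⟫`.
Along the flow `Q' = X Q` with the costate equation `P' = -(DX(Q))* P`, this is `⟪P, [X, F](Q)⟫`,
the Lie bracket of vector fields. With `X = L ξ` and `F = L w`, the closure condition identifies
`[L ξ, L w]` with `L (b ξ w)`.
-/

theorem hasDerivAt_inner_costate_lieBracket {E : Type*} [NormedAddCommGroup E]
    [InnerProductSpace ℝ E] {X F : E → E} {Q P : ℝ → E} {p' : E} {t : ℝ}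
    (hQ : HasDerivAt Q (X (Q t)) t) (hP : HasDerivAt P p' t)
    (hcostate : ∀ v, ⟪p', v⟫ = -⟪P t, fderiv ℝ X (Q t) v⟫)
    (hF : DifferentiableAt ℝ F (Q t)) :
    HasDerivAt (fun s => ⟪P s, F (Q s)⟫) ⟪P t, lieBracket ℝ X F (Q t)⟫ t := by
  have hFQ : HasDerivAt (fun s => F (Q s)) (fderiv ℝ F (Q t) (X (Q t))) t :=
    hF.hasFDerivAt.comp_hasDerivAt t hQ
  refine (hP.inner ℝ hFQ).congr_deriv ?_
  rw [hcostate, lieBracket, inner_sub_right]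
  ring

theorem clebsch_elimination_euler_poincare_general
    {V M : Type*}
    [NormedAddCommGroup M] [InnerProductSpace ℝ M]
    (L : V → M → M)
    (hLsmooth : ∀ w : V, ContDiff ℝ 1 (fun Q : M => L w Q))
    (b : V → V → V)
    (hclosed : ∀ (u v : V) (Q : M),
      L (b u v) Q = fderiv ℝ (L v) Q (L u Q) - fderiv ℝ (L u) Q (L v Q))
    (ξ : ℝ → V)
    (Q P : ℝ → M) (P' : ℝ → M)
    (hQ : ∀ t : ℝ, HasDerivAt Q (L (ξ t) (Q t)) t)
    (hP : ∀ t : ℝ, HasDerivAt P (P' t) t)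
    (hPeq : ∀ (t : ℝ) (v : M), ⟪P' t, v⟫ = -⟪P t, fderiv ℝ (L (ξ t)) (Q t) v⟫) :
    ∀ (w : V) (t : ℝ),
      HasDerivAt (fun s : ℝ => ⟪P s, L w (Q s)⟫)
        ⟪P t, L (b (ξ t) w) (Q t)⟫ t := by
  intro w t
  rw [hclosed, ← lieBracket]
  exact hasDerivAt_inner_costate_lieBracket (hQ t) (hP t) (hPeq t)
    ((hLsmooth w).differentiable one_ne_zero _)

/-- **Elimination of canonical variables (forward direction of the
reduction theorem).** If the velocity map `L` is closed (i.e. is a Lie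
algebra action with bracket `b`), then along solutions of the Clebsch
equations the momentum pairing `t ↦ ⟪P t, L w (Q t)⟫` satisfies the
Euler–Poincaré equation. -/
theorem clebsch_elimination_euler_poincare
    {V M : Type*}
    [NormedAddCommGroup V] [InnerProductSpace ℝ V] [FiniteDimensional ℝ V]
    [NormedAddCommGroup M] [InnerProductSpace ℝ M] [FiniteDimensional ℝ M]
    (L : V → M → M)
    (hLlin : ∀ Q : M, IsLinearMap ℝ (fun w : V => L w Q))
    (hLsmooth : ∀ w : V, ContDiff ℝ 1 (fun Q : M => L w Q))
    (b : V → V → V)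
    (hclosed : ∀ (u v : V) (Q : M),
      L (b u v) Q = fderiv ℝ (L v) Q (L u Q) - fderiv ℝ (L u) Q (L v Q))
    (ξ : ℝ → V) (hξ : Continuous ξ)
    (Q P : ℝ → M) (P' : ℝ → M)
    (hQ : ∀ t : ℝ, HasDerivAt Q (L (ξ t) (Q t)) t)
    (hP : ∀ t : ℝ, HasDerivAt P (P' t) t)
    (hPeq : ∀ (t : ℝ) (v : M), ⟪P' t, v⟫ = -⟪P t, fderiv ℝ (L (ξ t)) (Q t) v⟫) :
    ∀ (w : V) (t : ℝ),
      HasDerivAt (fun s : ℝ => ⟪P s, L w (Q s)⟫)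
        ⟪P t, L (b (ξ t) w) (Q t)⟫ t :=
  clebsch_elimination_euler_poincare_general L hLsmooth b hclosed ξ Q P P' hQ hP hPeq
end

section
/- Let V and M be finite-dimensional real inner product spaces, and let L : V → M → M be a velocity map that is linear in its first argument and such that for each w ∈ V the map Q ↦ L w Q is continuously differentiable. Suppose the closure condition holds: there is a bracket b : V → V → V such that L (b u v) Q = (D(L v)(Q))(L u Q) − (D(L u)(Q))(L v Q) for all u, v ∈ V and Q ∈ M. Let ξ : ℝ → V be continuous, g : ℝ → M be continuous (playing the role of δl/δQ along the solution), and let Q, P : ℝ → M be differentiable curves satisfying, for all t: (i) Q′(t) = L (ξ t) (Q t), and (ii) ⟪P′(t), v⟫ = −⟪P t, (D(L (ξ t))(Q t))(v)⟫ + ⟪g t, v⟫ for every v ∈ M. Then for every w ∈ V, the function t ↦ ⟪P t, L w (Q t)⟫ is differentiable with derivative ⟪P t, L (b (ξ t) w) (Q t)⟫ + ⟪g t, L w (Q t)⟫; this is the Euler–Poincaré equation with advected quantities, the extra term being the pairing ⟨−(δl/δQ) ⋄ Q, w⟩ = ⟪g, L w Q⟫. -/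
open RealInnerProductSpace

theorem HasDerivAt.inner_comp_differentiableAt
    {M : Type*} [NormedAddCommGroup M] [InnerProductSpace ℝ M]
    {F : M → M} {P Q : ℝ → M} {P' Q' : M} {t : ℝ}
    (hP : HasDerivAt P P' t) (hQ : HasDerivAt Q Q' t) (hF : DifferentiableAt ℝ F (Q t)) :
    HasDerivAt (fun s => ⟪P s, F (Q s)⟫) (⟪P t, fderiv ℝ F (Q t) Q'⟫ + ⟪P', F (Q t)⟫) t :=
  hP.inner ℝ (hF.hasFDerivAt.comp_hasDerivAt t hQ)

theorem clebsch_elimination_euler_poincare_with_potential_general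
    {V M : Type*}
    [NormedAddCommGroup V] [InnerProductSpace ℝ V]
    [NormedAddCommGroup M] [InnerProductSpace ℝ M]
    (L : V → M → M)
    (hLsmooth : ∀ w : V, ContDiff ℝ 1 (fun Q : M => L w Q))
    (b : V → V → V)
    (hclosed : ∀ (u v : V) (Q : M),
      L (b u v) Q = fderiv ℝ (L v) Q (L u Q) - fderiv ℝ (L u) Q (L v Q))
    (ξ : ℝ → V)
    (g : ℝ → M)
    (Q P : ℝ → M) (P' : ℝ → M)
    (hQ : ∀ t : ℝ, HasDerivAt Q (L (ξ t) (Q t)) t)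
    (hP : ∀ t : ℝ, HasDerivAt P (P' t) t)
    (hPeq : ∀ (t : ℝ) (v : M),
      ⟪P' t, v⟫ = -⟪P t, fderiv ℝ (L (ξ t)) (Q t) v⟫ + ⟪g t, v⟫) :
    ∀ (w : V) (t : ℝ),
      HasDerivAt (fun s : ℝ => ⟪P s, L w (Q s)⟫)
        (⟪P t, L (b (ξ t) w) (Q t)⟫ + ⟪g t, L w (Q t)⟫) t := by
  intro w t
  have hLw : DifferentiableAt ℝ (L w) (Q t) :=
    (hLsmooth w).differentiable one_ne_zero (Q t)
  refine ((hP t).inner_comp_differentiableAt (hQ t) hLw).congr_deriv ?_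
  rw [hPeq t, hclosed, inner_sub_right]
  ring

/-- **Elimination theorem with potential energy (forward direction).**
If the velocity map `L` is closed with bracket `b`, then along solutions of
the Clebsch equations with a potential force term `g = δl/δQ` the momentum
pairing satisfies the Euler–Poincaré equation with advected quantities. -/
theorem clebsch_elimination_euler_poincare_with_potential
    {V M : Type*}
    [NormedAddCommGroup V] [InnerProductSpace ℝ V] [FiniteDimensional ℝ V]
    [NormedAddCommGroup M] [InnerProductSpace ℝ M] [FiniteDimensional ℝ M]
    (L : V → M → M)
    (hLlin : ∀ Q : M, IsLinearMap ℝ (fun w : V => L w Q))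
    (hLsmooth : ∀ w : V, ContDiff ℝ 1 (fun Q : M => L w Q))
    (b : V → V → V)
    (hclosed : ∀ (u v : V) (Q : M),
      L (b u v) Q = fderiv ℝ (L v) Q (L u Q) - fderiv ℝ (L u) Q (L v Q))
    (ξ : ℝ → V) (hξ : Continuous ξ)
    (g : ℝ → M) (hg : Continuous g)
    (Q P : ℝ → M) (P' : ℝ → M)
    (hQ : ∀ t : ℝ, HasDerivAt Q (L (ξ t) (Q t)) t)
    (hP : ∀ t : ℝ, HasDerivAt P (P' t) t)
    (hPeq : ∀ (t : ℝ) (v : M),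
      ⟪P' t, v⟫ = -⟪P t, fderiv ℝ (L (ξ t)) (Q t) v⟫ + ⟪g t, v⟫) :
    ∀ (w : V) (t : ℝ),
      HasDerivAt (fun s : ℝ => ⟪P s, L w (Q s)⟫)
        (⟪P t, L (b (ξ t) w) (Q t)⟫ + ⟪g t, L w (Q t)⟫) t :=
  clebsch_elimination_euler_poincare_with_potential_general L hLsmooth b hclosed ξ g Q P P' hQ hP
    hPeq
end

section
/- Let V and M be finite-dimensional real inner product spaces, and let L : V × M → M be a velocity map, linear in its first argument and jointly continuously differentiable. Let l : V → ℝ be continuously differentiable with gradient ∇l : V → V (defined via the inner product on V), and suppose there is a continuously differentiable map G : V → V such that ∇l(G(m)) = m for all m ∈ V. For (Q,P) ∈ M × M define m(Q,P) ∈ V by ⟪m(Q,P), w⟫ = ⟪P, L w Q⟫ for all w ∈ V, and define the Hamiltonian H(Q,P) = ⟪P, L (G(m(Q,P))) Q⟫ − l(G(m(Q,P))). Then, writing ξ* = G(m(Q,P)), the partial derivatives of H satisfy: for every δP ∈ M, the derivative of H in the P-direction δP equals ⟪δP, L ξ* Q⟫, and for every δQ ∈ M, the derivative of H in the Q-direction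 δQ equals ⟪P, (D(L ξ*)(Q))(δQ)⟫. Consequently the Clebsch equations Q′ = L ξ* Q and ⟪P′, v⟫ = −⟪P, (D(L ξ*)(Q))(v)⟫ are canonical Hamilton's equations for H. -/
/-!
`H(Q, P)` is the Legendre transform `F μ = ⟪μ, G μ⟫ - l (G μ)` evaluated at the momentum
`μ = m(Q, P)`. Since `∇l (G μ) = μ`, the variation of `G` cancels in the derivative of `F`
(envelope theorem), which is therefore `⟪G μ, ·⟫`. By the chain rule the derivative of `H` in
either variable is then that of `⟪ξ*, m(Q, P)⟫ = ⟪P, L ξ* Q⟫` with `ξ* = G μ` frozen. The momentum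
is only known through its inner products, but in finite dimensions that suffices for
differentiability: expand it in an orthonormal basis.
-/

open RealInnerProductSpace

section

variable {E V : Type*} [NormedAddCommGroup E] [NormedSpace ℝ E]
  [NormedAddCommGroup V] [InnerProductSpace ℝ V]

theorem differentiableAt_of_forall_differentiableAt_inner [FiniteDimensional ℝ V]
    {f : E → V} {x : E} (h : ∀ w : V, DifferentiableAt ℝ (fun y => ⟪w, f y⟫) x) :
    DifferentiableAt ℝ f x := by
  let b := stdOrthonormalBasis ℝ V
  rw [← b.repr.comp_differentiableAt_iff, differentiableAt_euclidean]
  intro i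
  simpa only [Function.comp_apply, b.repr_apply_apply] using h (b i)

theorem HasFDerivAt.comp_of_hasFDerivAt_inner [FiniteDimensional ℝ V] {F : V → ℝ} {f : E → V}
    {x : E} {v : V} {φ : E →L[ℝ] ℝ} (hF : HasFDerivAt F (innerSL ℝ v) (f x))
    (hf : ∀ w : V, DifferentiableAt ℝ (fun y => ⟪w, f y⟫) x)
    (hφ : HasFDerivAt (fun y => ⟪v, f y⟫) φ x) :
    HasFDerivAt (fun y => F (f y)) φ x := by
  have hf' := (differentiableAt_of_forall_differentiableAt_inner hf).hasFDerivAt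
  rw [hφ.unique ((innerSL ℝ v).hasFDerivAt.comp x hf')]
  exact hF.comp x hf'

def legendreTransform (l : V → ℝ) (G : V → V) (μ : V) : ℝ :=
  ⟪μ, G μ⟫ - l (G μ)

theorem hasFDerivAt_legendreTransform [CompleteSpace V] {l : V → ℝ} {G : V → V} {μ : V}
    (hl : HasGradientAt l μ (G μ)) (hG : DifferentiableAt ℝ G μ) :
    HasFDerivAt (legendreTransform l G) (innerSL ℝ (G μ)) μ := by
  refine (((hasFDerivAt_id μ).inner ℝ hG.hasFDerivAt).sub
    (hl.hasFDerivAt.comp μ hG.hasFDerivAt)).congr_fderiv ?_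
  ext δμ
  simp [real_inner_comm]

end

theorem clebsch_hamiltonian_legendre_transform_general
    {V M : Type*}
    [NormedAddCommGroup V] [InnerProductSpace ℝ V] [FiniteDimensional ℝ V]
    [NormedAddCommGroup M] [InnerProductSpace ℝ M]
    (L : V → M → M)
    (hLsmooth : ContDiff ℝ 1 (fun p : V × M => L p.1 p.2))
    (l : V → ℝ) (hl : ContDiff ℝ 1 l)
    (G : V → V) (hG : ContDiff ℝ 1 G)
    (hGrad : ∀ m : V, gradient l (G m) = m)
    (m : M → M → V)
    (hm : ∀ (Q P : M) (w : V), ⟪m Q P, w⟫ = ⟪P, L w Q⟫)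
    (H : M → M → ℝ)
    (hH : ∀ Q P : M, H Q P = ⟪P, L (G (m Q P)) Q⟫ - l (G (m Q P))) :
    ∀ Q P : M,
      HasFDerivAt (fun P'' : M => H Q P'')
        (innerSL ℝ (L (G (m Q P)) Q)) P ∧
      HasFDerivAt (fun Q'' : M => H Q'' P)
        ((innerSL ℝ P).comp (fderiv ℝ (fun Q'' : M => L (G (m Q P)) Q'') Q)) Q := by
  intro Q P
  have hH_eq : ∀ Q P, H Q P = legendreTransform l G (m Q P) := fun Q P => by
    rw [hH, legendreTransform, hm]
  have hF : HasFDerivAt (legendreTransform l G) (innerSL ℝ (G (m Q P))) (m Q P) := by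
    refine hasFDerivAt_legendreTransform ?_ (hG.differentiable one_ne_zero _)
    simpa only [hGrad] using (hl.differentiable one_ne_zero (G (m Q P))).hasGradientAt
  have hm_P : ∀ w, (fun P' => ⟪w, m Q P'⟫) = innerSL ℝ (L w Q) := fun w => by
    ext P'
    rw [real_inner_comm, hm, innerSL_apply_apply, real_inner_comm]
  have hm_Q : ∀ w, (fun Q' => ⟪w, m Q' P⟫) = fun Q' => ⟪P, L w Q'⟫ := fun w => by
    ext Q'
    rw [real_inner_comm, hm]
  have hL : ∀ w, Differentiable ℝ (L w) := fun w =>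
    (hLsmooth.differentiable one_ne_zero).comp ((differentiable_const w).prodMk differentiable_id)
  simp only [hH_eq]
  constructor
  · refine hF.comp_of_hasFDerivAt_inner (fun w => ?_) ?_ <;> rw [hm_P]
    exacts [(innerSL ℝ _).differentiableAt, (innerSL ℝ _).hasFDerivAt]
  · refine hF.comp_of_hasFDerivAt_inner (f := fun Q' => m Q' P) (fun w => ?_) ?_ <;> rw [hm_Q]
    exacts [(innerSL ℝ P).differentiableAt.comp Q (hL w Q),
      (innerSL ℝ P).hasFDerivAt.comp Q (hL _ Q).hasFDerivAt]

/-- **Legendre transform lemma.** If the Lagrangian `l` can be inverted for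
`ξ` via a map `G` applied to `δl/δξ` (i.e. `∇l (G m) = m`), then the Clebsch
equations for `Q` and `P` are canonical Hamilton's equations for
`H(Q,P) = ⟪P, L (G (m(Q,P))) Q⟫ − l (G (m(Q,P)))`, where the momentum
`m(Q,P)` is defined by `⟪m(Q,P), w⟫ = ⟪P, L w Q⟫`. -/
theorem clebsch_hamiltonian_legendre_transform
    {V M : Type*}
    [NormedAddCommGroup V] [InnerProductSpace ℝ V] [FiniteDimensional ℝ V]
    [NormedAddCommGroup M] [InnerProductSpace ℝ M] [FiniteDimensional ℝ M]
    (L : V → M → M)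
    (hLlin : ∀ Q : M, IsLinearMap ℝ (fun w : V => L w Q))
    (hLsmooth : ContDiff ℝ 1 (fun p : V × M => L p.1 p.2))
    (l : V → ℝ) (hl : ContDiff ℝ 1 l)
    (G : V → V) (hG : ContDiff ℝ 1 G)
    (hGrad : ∀ m : V, gradient l (G m) = m)
    (m : M → M → V)
    (hm : ∀ (Q P : M) (w : V), ⟪m Q P, w⟫ = ⟪P, L w Q⟫)
    (H : M → M → ℝ)
    (hH : ∀ Q P : M, H Q P = ⟪P, L (G (m Q P)) Q⟫ - l (G (m Q P))) :
    ∀ Q P : M,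
      HasFDerivAt (fun P'' : M => H Q P'')
        (innerSL ℝ (L (G (m Q P)) Q)) P ∧
      HasFDerivAt (fun Q'' : M => H Q'' P)
        ((innerSL ℝ P).comp (fderiv ℝ (fun Q'' : M => L (G (m Q P)) Q'') Q)) Q :=
  clebsch_hamiltonian_legendre_transform_general L hLsmooth l hl G hG hGrad m hm H hH
end

section
/- Let I be a fixed real 3×3 matrix and let Q, P, Ω : ℝ → Matrix (Fin 3) (Fin 3) ℝ with Q and P differentiable and, for all t: Q′(t) = Q(t)·Ω(t), P′(t) = P(t)·Ω(t), Ω(t)ᵀ = −Ω(t), and I·Ω(t) = Q(t)ᵀ·P(t). Then t ↦ I·Ω(t) is differentiable with derivative d/dt (I·Ω(t)) = (I·Ω(t))·Ω(t) − Ω(t)·(I·Ω(t)), i.e. IΩ satisfies the rigid body equation d/dt(IΩ) = [IΩ, Ω]. -/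
/-! By the product rule `d/dt (QᵀP) = (QΩ)ᵀP + Qᵀ(PΩ) = ΩᵀQᵀP + QᵀPΩ`, and skew-symmetry
`Ωᵀ = -Ω` turns this into the commutator `[QᵀP, Ω]`. -/

open Matrix
attribute [local instance] Matrix.frobeniusNormedAddCommGroup Matrix.frobeniusNormedSpace

attribute [local instance] Matrix.frobeniusNormedRing Matrix.frobeniusNormedAlgebra

theorem Matrix.transpose_mul_mul_add_transpose_mul_mul_of_transpose_eq_neg
    {k n R : Type*} [Fintype k] [Fintype n] [CommRing R]
    (Q P : Matrix k n R) {Ω : Matrix n n R} (hΩ : Ωᵀ = -Ω) :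
    (Q * Ω)ᵀ * P + Qᵀ * (P * Ω) = Qᵀ * P * Ω - Ω * (Qᵀ * P) := by
  rw [transpose_mul, hΩ, Matrix.neg_mul, Matrix.neg_mul, Matrix.mul_assoc, Matrix.mul_assoc]
  abel

theorem HasDerivAt.matrix_transpose {𝕜 m n : Type*} [NontriviallyNormedField 𝕜]
    [CompleteSpace 𝕜] [Fintype m] [Fintype n] {f : 𝕜 → Matrix m n 𝕜} {f' : Matrix m n 𝕜} {t : 𝕜}
    (hf : HasDerivAt f f' t) : HasDerivAt (fun s => (f s)ᵀ) f'ᵀ t :=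
  (transposeLinearEquiv m n 𝕜 𝕜).toLinearMap.toContinuousLinearMap.hasFDerivAt.comp_hasDerivAt
    t hf

theorem hasDerivAt_transpose_mul_of_hasDerivAt_mul_skew {𝕜 n : Type*} [RCLike 𝕜]
    [Fintype n] [DecidableEq n] {Q P Ω : 𝕜 → Matrix n n 𝕜} {t : 𝕜}
    (hQ : HasDerivAt Q (Q t * Ω t) t) (hP : HasDerivAt P (P t * Ω t) t)
    (hΩ : (Ω t)ᵀ = -Ω t) :
    HasDerivAt (fun s => (Q s)ᵀ * P s)
      ((Q t)ᵀ * P t * Ω t - Ω t * ((Q t)ᵀ * P t)) t := by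
  rw [← transpose_mul_mul_add_transpose_mul_mul_of_transpose_eq_neg _ _ hΩ]
  exact hQ.matrix_transpose.mul hP

/-- **Rigid body elimination.** If `Q̇ = QΩ`, `Ṗ = PΩ`, `Ωᵀ = −Ω` and
`IΩ = QᵀP`, then the body angular momentum `IΩ` satisfies the Euler rigid
body equation `d/dt (IΩ) = [IΩ, Ω]`. -/
theorem rigid_body_elimination
    (I : Matrix (Fin 3) (Fin 3) ℝ)
    (Q P Ω : ℝ → Matrix (Fin 3) (Fin 3) ℝ)
    (hQ : ∀ t : ℝ, HasDerivAt Q (Q t * Ω t) t)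
    (hP : ∀ t : ℝ, HasDerivAt P (P t * Ω t) t)
    (hskew : ∀ t : ℝ, (Ω t)ᵀ = -Ω t)
    (hmom : ∀ t : ℝ, I * Ω t = (Q t)ᵀ * P t) :
    ∀ t : ℝ,
      HasDerivAt (fun s : ℝ => I * Ω s)
        ((I * Ω t) * Ω t - Ω t * (I * Ω t)) t := by
  intro t
  simp_rw [hmom]
  exact hasDerivAt_transpose_mul_of_hasDerivAt_mul_skew (hQ t) (hP t) (hskew t)
end

section
/- Fix n ≥ 1 and let u : ℝ → (EuclideanSpace ℝ (Fin n) → EuclideanSpace ℝ (Fin n)) be a time-dependent vector field such that for each t the map u t is differentiable, let w : EuclideanSpace ℝ (Fin n) → EuclideanSpace ℝ (Fin n) be differentiable, and let Q, P : ℝ → EuclideanSpace ℝ (Fin n) be differentiable curves satisfying, for all t: Q′(t) = u t (Q t), and ⟪P′(t), a⟫ = −⟪P t, (D(u t)(Q t))(a)⟫ for every vector a (i.e. Ṗ = −(∇u(Q))ᵀ·P). Then the function t ↦ ⟪P t, w (Q t)⟫ is differentiable with derivative −⟪P t, (D(u t)(Q t))(w (Q t))⟫ + ⟪P t, (Dw(Q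 t))(u t (Q t))⟫, which is the weak (pointwise-in-label) form of the EPDiff equation satisfied along the singular solutions. -/
open RealInnerProductSpace

/-- **Weak form of EPDiff along singular solutions.** If `Q̇ = u(Q)` and
`Ṗ = −(∇u(Q))ᵀ·P`, then for any differentiable test vector field `w` the
pairing `t ↦ ⟪P t, w (Q t)⟫` is differentiable with derivative
`−⟪P, (Du(Q))(w(Q))⟫ + ⟪P, (Dw(Q))(u(Q))⟫`. -/
theorem epdiff_singular_weak_form
    (n : ℕ) (hn : 1 ≤ n)
    (u : ℝ → EuclideanSpace ℝ (Fin n) → EuclideanSpace ℝ (Fin n))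
    (hu : ∀ t : ℝ, Differentiable ℝ (u t))
    (w : EuclideanSpace ℝ (Fin n) → EuclideanSpace ℝ (Fin n))
    (hw : Differentiable ℝ w)
    (Q P : ℝ → EuclideanSpace ℝ (Fin n))
    (P' : ℝ → EuclideanSpace ℝ (Fin n))
    (hQ : ∀ t : ℝ, HasDerivAt Q (u t (Q t)) t)
    (hP : ∀ t : ℝ, HasDerivAt P (P' t) t)
    (hPeq : ∀ (t : ℝ) (a : EuclideanSpace ℝ (Fin n)),
      ⟪P' t, a⟫ = -⟪P t, fderiv ℝ (u t) (Q t) a⟫) :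
    ∀ t : ℝ,
      HasDerivAt (fun s : ℝ => ⟪P s, w (Q s)⟫)
        (-⟪P t, fderiv ℝ (u t) (Q t) (w (Q t))⟫
          + ⟪P t, fderiv ℝ w (Q t) (u t (Q t))⟫) t := by
  intro t
  have h1 : HasDerivAt (fun s => w (Q s)) (fderiv ℝ w (Q t) (u t (Q t))) t :=
    (hw (Q t)).hasFDerivAt.comp_hasDerivAt t (hQ t)
  have h2 := (hP t).inner ℝ h1
  have h3 : ⟪P' t, w (Q t)⟫ = -⟪P t, fderiv ℝ (u t) (Q t) (w (Q t))⟫ := hPeq t _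
  simpa [h3, add_comm] using h2
end

section
/- Let X, X′, M, M′ be n×n real matrices with Xᵀ = −X and (X′)ᵀ = −X′, let h > 0, set a = h/2, and suppose I − aX and I − aX′ are invertible (so that E = cay(hX) = (I + aX)(I − aX)⁻¹ and E′ = cay(hX′) = (I + aX′)(I − aX′)⁻¹ are defined, and I + aX = (I − aX)ᵀ, I + aX′ = (I − aX′)ᵀ are invertible). Then the compact form of the discrete Clebsch P-equation, (E′)ᵀ · (((I + E′)/2)⁻¹)ᵀ · M′ · (((I + E′)/2)⁻¹)ᵀ = (((I + E)/2)⁻¹)ᵀ · M · Eᵀ · (((I + E)/2)⁻¹)ᵀ, holds if and only if (I − aX′)·M′·(I + aX′) = (I + aX)·M·(I − aX). -/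
open Matrix

private lemma cay_aux (n : ℕ) (Y : Matrix (Fin n) (Fin n) ℝ) (a : ℝ)
    (hY : Yᵀ = -Y) (hU : IsUnit (1 - a • Y)) (E : Matrix (Fin n) (Fin n) ℝ)
    (hE : E = (1 + a • Y) * (1 - a • Y)⁻¹) :
    (((2⁻¹ : ℝ) • (1 + E))⁻¹)ᵀ = 1 + a • Y ∧
      Eᵀ = (1 + a • Y)⁻¹ * (1 - a • Y) ∧
      IsUnit (1 + a • Y).det ∧ IsUnit (1 - a • Y).det ∧
      (1 - a • Y) * (1 + a • Y) = (1 + a • Y) * (1 - a • Y) := by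
  have hdA : IsUnit (1 - a • Y).det := (Matrix.isUnit_iff_isUnit_det _).mp hU
  have hAT : (1 - a • Y)ᵀ = 1 + a • Y := by
    rw [Matrix.transpose_sub, Matrix.transpose_smul, hY, Matrix.transpose_one,
      smul_neg, sub_neg_eq_add]
  have hBT : (1 + a • Y)ᵀ = 1 - a • Y := by
    rw [Matrix.transpose_add, Matrix.transpose_smul, hY, Matrix.transpose_one,
      smul_neg, ← sub_eq_add_neg]
  have hdB : IsUnit (1 + a • Y).det := by
    rw [← hAT, Matrix.det_transpose]; exact hdA
  have hcomm : (1 - a • Y) * (1 + a • Y) = (1 + a • Y) * (1 - a • Y) :=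
    ((Commute.one_left (1 + a • Y)).sub_left
      ((Commute.one_right (a • Y)).add_right (Commute.refl (a • Y)))).eq
  have h1E : (2⁻¹ : ℝ) • (1 + E) = (1 - a • Y)⁻¹ := by
    have : (1 : Matrix (Fin n) (Fin n) ℝ) + E
        = ((1 - a • Y) + (1 + a • Y)) * (1 - a • Y)⁻¹ := by
      rw [add_mul, Matrix.mul_nonsing_inv _ hdA, hE]
    rw [this]
    have h2 : (1 - a • Y) + (1 + a • Y) = (2 : ℝ) • (1 : Matrix (Fin n) (Fin n) ℝ) := by
      rw [two_smul]; abel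
    rw [h2, smul_mul_assoc, one_mul, smul_smul]
    norm_num
  have hCT : (((2⁻¹ : ℝ) • (1 + E))⁻¹)ᵀ = 1 + a • Y := by
    rw [h1E, Matrix.nonsing_inv_nonsing_inv _ hdA, hAT]
  have hET : Eᵀ = (1 + a • Y)⁻¹ * (1 - a • Y) := by
    rw [hE, Matrix.transpose_mul, Matrix.transpose_nonsing_inv, hAT, hBT]
  exact ⟨hCT, hET, hdB, hdA, hcomm⟩

/-- **Reduction of the compact form of the discrete Clebsch P-equation.**
With `E = cay(hX)` and `E' = cay(hX')` for skew-symmetric `X, X'`, the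
compact form of the discrete Clebsch P-equation holds if and only if
`(I − aX')·M'·(I + aX') = (I + aX)·M·(I − aX)` where `a = h/2`. -/
theorem discrete_clebsch_P_equation_reduction
    (n : ℕ) (X X' M M' : Matrix (Fin n) (Fin n) ℝ)
    (hX : Xᵀ = -X) (hX' : X'ᵀ = -X')
    (h a : ℝ) (hh : 0 < h) (ha : a = h / 2)
    (hXa : IsUnit (1 - a • X)) (hX'a : IsUnit (1 - a • X'))
    (E E' : Matrix (Fin n) (Fin n) ℝ)
    (hE : E = (1 + a • X) * (1 - a • X)⁻¹)
    (hE' : E' = (1 + a • X') * (1 - a • X')⁻¹) :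
    (E'ᵀ * (((2⁻¹ : ℝ) • (1 + E'))⁻¹)ᵀ * M' * (((2⁻¹ : ℝ) • (1 + E'))⁻¹)ᵀ
        = (((2⁻¹ : ℝ) • (1 + E))⁻¹)ᵀ * M * Eᵀ * (((2⁻¹ : ℝ) • (1 + E))⁻¹)ᵀ)
      ↔ (1 - a • X') * M' * (1 + a • X') = (1 + a • X) * M * (1 - a • X) := by
  obtain ⟨hCT, hET, hdB, hdA, hcomm⟩ := cay_aux n X a hX hXa E hE
  obtain ⟨hCT', hET', hdB', hdA', hcomm'⟩ := cay_aux n X' a hX' hX'a E' hE'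
  have hL : E'ᵀ * (((2⁻¹ : ℝ) • (1 + E'))⁻¹)ᵀ * M' * (((2⁻¹ : ℝ) • (1 + E'))⁻¹)ᵀ
      = (1 - a • X') * M' * (1 + a • X') := by
    rw [hCT', hET']
    rw [mul_assoc ((1 + a • X')⁻¹), hcomm', ← mul_assoc,
      Matrix.nonsing_inv_mul _ hdB', one_mul]
  have hR : (((2⁻¹ : ℝ) • (1 + E))⁻¹)ᵀ * M * Eᵀ * (((2⁻¹ : ℝ) • (1 + E))⁻¹)ᵀ
      = (1 + a • X) * M * (1 - a • X) := by
    rw [hCT, hET]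
    rw [mul_assoc _ ((1 + a • X)⁻¹ * (1 - a • X)), mul_assoc ((1 + a • X)⁻¹),
      hcomm, ← mul_assoc ((1 + a • X)⁻¹), Matrix.nonsing_inv_mul _ hdB, one_mul]
  rw [hL, hR]
end
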